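/- For every S ≥ 1 and every choice of points x_1, …, x_S ∈ Ω, E[ sup_{(b,c) ∈ T} ‖ ∑_{i=1}^S ξ_i σ(b * x_i + c) ‖_∞ ] ≤ 2 D_2 · E[ ‖ ∑_{i=1}^S ξ_i x_i ‖_∞ ] + 2 · E[ | ∑_{i=1}^S ξ_i | ], where the expectations are over the i.i.d. Rademacher variables ξ_1, …, ξ_S. -/

import Mathlib

open MeasureTheory ENNReal

noncomputable section

abbrev Vec (N : ℕ) := Fin N → ℝ

abbrev Param (N : ℕ) := Vec N × Vec N × Vec N

/-- componentwise ReLU -/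
def relu {N : ℕ} (x : Vec N) : Vec N := fun i => max (x i) 0

/-- graph convolution defined via the orthogonal matrix `U` -/
def conv {N : ℕ} (U : Matrix (Fin N) (Fin N) ℝ) (b x : Vec N) : Vec N :=
  U.mulVec (U.transpose.mulVec b * U.transpose.mulVec x)

/-- The data and standing assumptions of the graph Barron space setting. -/
structure Setting (N : ℕ) where
  U : Matrix (Fin N) (Fin N) ℝ
  W : Submodule ℝ (Vec N)
  dom : Set (Vec N)
  nrm : Vec N → ℝ
  conorm : Vec N → ℝ
  hN : 1 ≤ N
  hU : U.transpose * U = 1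
  hdomc : IsCompact dom
  hdomne : dom.Nonempty
  nrm_add : ∀ x y, nrm (x + y) ≤ nrm x + nrm y
  nrm_smul : ∀ (t : ℝ) (x), nrm (t • x) = |t| * nrm x
  nrm_eq_zero : ∀ x, nrm x = 0 ↔ x = 0
  relu_nrm_le : ∀ x, nrm (relu x) ≤ nrm x
  conorm_add : ∀ b b', b ∈ W → b' ∈ W → conorm (b + b') ≤ conorm b + conorm b'
  conorm_smul : ∀ (t : ℝ) (b), b ∈ W → conorm (t • b) = |t| * conorm b
  conorm_eq_zero : ∀ b, b ∈ W → (conorm b = 0 ↔ b = 0)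
  conv_nrm_le : ∀ b ∈ W, ∀ x ∈ dom, nrm (conv U b x) ≤ conorm b

namespace Setting

variable {N : ℕ} (S : Setting N)

/-- dual norm `‖a‖_* = sup {aᵀx : ‖x‖ ≤ 1}` -/
def dual (a : Vec N) : ℝ :=
  sSup {t : ℝ | ∃ x : Vec N, S.nrm x ≤ 1 ∧ t = ∑ i, a i * x i}

/-- the neuron `aᵀ σ(b*x + c)` -/
def neuron (x : Vec N) (p : Param N) : ℝ :=
  ∑ i, p.1 i * relu (conv S.U p.2.1 x + p.2.2) i

/-- `P_f`: probability measures on `ℝ^N × W × ℝ^N` representing `f` on `Ω`. -/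
def reps (f : Vec N → ℝ) : Set (Measure (Param N)) :=
  {ρ | IsProbabilityMeasure ρ ∧ ρ {p : Param N | p.2.1 ∉ S.W} = 0 ∧
    ∀ x ∈ S.dom, Integrable (S.neuron x) ρ ∧ f x = ∫ p, S.neuron x p ∂ρ}

/-- the weight `‖a‖_* (‖b‖_co + ‖c‖)` -/
def weight (p : Param N) : ℝ := S.dual p.1 * (S.conorm p.2.1 + S.nrm p.2.2)

def cost (ρ : Measure (Param N)) : ℝ≥0∞ :=
  ∫⁻ p, ENNReal.ofReal (S.weight p) ∂ρ

/-- the Barron norm `‖f‖_{B_1} ∈ [0,∞]` -/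
def barron (f : Vec N → ℝ) : ℝ≥0∞ :=
  ⨅ ρ ∈ S.reps f, S.cost ρ

/-- membership in the Barron space `B = B_1` -/
def memB (f : Vec N → ℝ) : Prop :=
  (S.reps f).Nonempty ∧ S.barron f < ⊤

/-- `(a,b,c)` lies in `S × T` -/
def onST (p : Param N) : Prop :=
  S.dual p.1 = 1 ∧ p.2.1 ∈ S.W ∧ S.conorm p.2.1 + S.nrm p.2.2 = 1

/-- output of the shallow GCNN with parameters `θ` -/
def netOut {M : ℕ} (θ : Fin M → Param N) (x : Vec N) : ℝ :=
  (M : ℝ)⁻¹ * ∑ m, S.neuron x (θ m)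

/-- the `p`-path norm, `1 ≤ p ≤ ∞` -/
def pathNorm {M : ℕ} (p : ℝ≥0∞) (θ : Fin M → Param N) : ℝ :=
  if p = ⊤ then ⨆ m, S.weight (θ m)
  else ((M : ℝ)⁻¹ * ∑ m, S.weight (θ m) ^ p.toReal) ^ (p.toReal)⁻¹

/-- the class `C_{Q,p}` of GCNN outputs with `p`-path norm at most `Q` -/
def CQp (Q : ℝ) (p : ℝ≥0∞) : Set (Vec N → ℝ) :=
  {g | ∃ M : ℕ, 1 ≤ M ∧ ∃ θ : Fin M → Param N,
    (∀ m, (θ m).2.1 ∈ S.W) ∧ S.pathNorm p θ ≤ Q ∧ ∀ x ∈ S.dom, g x = S.netOut θ x}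

end Setting

/-- a Rademacher sign -/
def sgn (b : Bool) : ℝ := if b then 1 else -1


section ContractionMachinery

lemma sgn_cases (b : Bool) : sgn b = 1 ∨ sgn b = -1 := by cases b <;> simp [sgn]
lemma abs_sgn (b : Bool) : |sgn b| = 1 := by rcases sgn_cases b with h | h <;> simp [h]
lemma sgn_not (b : Bool) : sgn (!b) = - sgn b := by cases b <;> simp [sgn]

lemma bddR {ι : Type*} (h : ι → ℝ) (B : ℝ) (hb : ∀ a, h a ≤ B) : BddAbove (Set.range h) :=
  ⟨B, by rintro _ ⟨a, rfl⟩; exact hb a⟩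

lemma onestep {ι : Type*} [Nonempty ι] (u v w : ι → ℝ)
    (hw1 : BddAbove (Set.range fun a => u a + w a))
    (hw2 : BddAbove (Set.range fun a => u a - w a))
    (hlip : ∀ a a', |v a - v a'| ≤ |w a - w a'|) :
    (⨆ a, (u a + v a)) + (⨆ a, (u a - v a)) ≤ (⨆ a, (u a + w a)) + (⨆ a, (u a - w a)) := by
  set R := (⨆ a, (u a + w a)) + (⨆ a, (u a - w a)) with hR
  have key : ∀ a a', (u a + v a) + (u a' - v a') ≤ R := by
    intro a a'
    have h1 : v a - v a' ≤ |w a - w a'| := (le_abs_self _).trans (by simpa using hlip a a')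
    have e1 : u a + w a ≤ ⨆ a, (u a + w a) := le_ciSup hw1 a
    have e2 : u a' - w a' ≤ ⨆ a, (u a - w a) := le_ciSup hw2 a'
    have e3 : u a' + w a' ≤ ⨆ a, (u a + w a) := le_ciSup hw1 a'
    have e4 : u a - w a ≤ ⨆ a, (u a - w a) := le_ciSup hw2 a
    rcases abs_cases (w a - w a') with ⟨h, _⟩ | ⟨h, _⟩ <;> rw [h] at h1 <;> linarith
  have h1 : ∀ a, (u a + v a) + (⨆ a', (u a' - v a')) ≤ R := by
    intro a
    have : (⨆ a', (u a' - v a')) ≤ R - (u a + v a) := ciSup_le fun a' => by linarith [key a a']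
    linarith
  have h2 : (⨆ a, (u a + v a)) ≤ R - (⨆ a', (u a' - v a')) :=
    ciSup_le fun a => by linarith [h1 a]
  linarith

variable {n : ℕ}

def flipAt (j : Fin n) (ξ : Fin n → Bool) : Fin n → Bool := Function.update ξ j (!ξ j)

lemma flipAt_invol (j : Fin n) : Function.Involutive (flipAt j) := by
  intro ξ; funext i
  by_cases h : i = j
  · subst h; simp [flipAt]
  · simp [flipAt, Function.update_of_ne h]

lemma sum_flipAt (j : Fin n) (F : (Fin n → Bool) → ℝ) :
    ∑ ξ : Fin n → Bool, F (flipAt j ξ) = ∑ ξ : Fin n → Bool, F ξ :=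
  Fintype.sum_equiv ((flipAt_invol j).toPerm _) _ _ (fun _ => rfl)

lemma flipAt_apply_self (j : Fin n) (ξ : Fin n → Bool) : flipAt j ξ j = !ξ j := by
  simp [flipAt]

lemma flipAt_apply_ne (j i : Fin n) (ξ : Fin n → Bool) (h : i ≠ j) : flipAt j ξ i = ξ i := by
  simp [flipAt, Function.update_of_ne h]

variable {ι : Type*} [Nonempty ι]

/-- interpolated functional -/
noncomputable def Phi (f g : ι → Fin n → ℝ) (s : Finset (Fin n)) : ℝ :=
  ∑ ξ : Fin n → Bool, ⨆ a, ∑ i, sgn (ξ i) * (if i ∈ s then g a i else f a i)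

lemma phi_step (f g : ι → Fin n → ℝ) (C : ℝ) (hC : 0 ≤ C)
    (hf : ∀ a i, |f a i| ≤ C) (hg : ∀ a i, |g a i| ≤ C)
    (hlip : ∀ a a' (i : Fin n), |f a i - f a' i| ≤ |g a i - g a' i|)
    (s : Finset (Fin n)) (j : Fin n) (hj : j ∉ s) :
    Phi f g s ≤ Phi f g (insert j s) := by
  classical
  set u : (Fin n → Bool) → ι → ℝ := fun ξ a =>
    ∑ i ∈ Finset.univ.erase j, sgn (ξ i) * (if i ∈ s then g a i else f a i) with hu
  have hmem : j ∈ (Finset.univ : Finset (Fin n)) := Finset.mem_univ j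
  have hubd : ∀ ξ a, |u ξ a| ≤ n * C := by
    intro ξ a
    calc |u ξ a| ≤ ∑ i ∈ Finset.univ.erase j, |sgn (ξ i) * (if i ∈ s then g a i else f a i)| :=
          Finset.abs_sum_le_sum_abs _ _
      _ ≤ ∑ _i ∈ Finset.univ.erase j, C := by
          apply Finset.sum_le_sum
          intro i _
          rw [abs_mul, abs_sgn, one_mul]
          split <;> [exact hg a i; exact hf a i]
      _ ≤ n * C := by
          rw [Finset.sum_const, nsmul_eq_mul]
          have : ((Finset.univ.erase j).card : ℝ) ≤ n := by
            have := Finset.card_erase_le (a := j) (s := (Finset.univ : Finset (Fin n)))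
            have h2 : (Finset.univ : Finset (Fin n)).card = n :=
              Finset.card_univ.trans (Fintype.card_fin n)
            calc ((Finset.univ.erase j).card : ℝ)
                ≤ ((Finset.univ : Finset (Fin n)).card : ℝ) := by exact_mod_cast this
              _ = n := by exact_mod_cast h2
          nlinarith
  have hu_flip : ∀ ξ a, u (flipAt j ξ) a = u ξ a := by
    intro ξ a
    apply Finset.sum_congr rfl
    intro i hi
    rw [flipAt_apply_ne j i ξ (Finset.mem_erase.1 hi).1]
  have hFs : ∀ ξ a, (∑ i, sgn (ξ i) * (if i ∈ s then g a i else f a i))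
      = u ξ a + sgn (ξ j) * f a j := by
    intro ξ a
    rw [← Finset.add_sum_erase _ _ hmem, if_neg hj, add_comm]
  have hFt : ∀ ξ a, (∑ i, sgn (ξ i) * (if i ∈ insert j s then g a i else f a i))
      = u ξ a + sgn (ξ j) * g a j := by
    intro ξ a
    rw [← Finset.add_sum_erase _ _ hmem, if_pos (Finset.mem_insert_self j s), add_comm]
    congr 1
    apply Finset.sum_congr rfl
    intro i hi
    have hij : i ≠ j := (Finset.mem_erase.1 hi).1
    congr 2
    simp [Finset.mem_insert, hij]
  have hPs : Phi f g s = ∑ ξ : Fin n → Bool, ⨆ a, (u ξ a + sgn (ξ j) * f a j) := by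
    apply Finset.sum_congr rfl; intro ξ _; exact congrArg _ (funext (hFs ξ))
  have hPt : Phi f g (insert j s) = ∑ ξ : Fin n → Bool, ⨆ a, (u ξ a + sgn (ξ j) * g a j) := by
    apply Finset.sum_congr rfl; intro ξ _; exact congrArg _ (funext (hFt ξ))
  have doubling : ∀ F : (Fin n → Bool) → ι → ℝ, (∀ ξ a, F (flipAt j ξ) a = F ξ a) →
      ∀ h : ι → ℝ,
      2 * (∑ ξ : Fin n → Bool, ⨆ a, (F ξ a + sgn (ξ j) * h a))
        = ∑ ξ : Fin n → Bool,
            ((⨆ a, (F ξ a + sgn (ξ j) * h a)) + ⨆ a, (F ξ a - sgn (ξ j) * h a)) := by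
    intro F hF h
    rw [Finset.sum_add_distrib, two_mul]
    congr 1
    rw [← sum_flipAt j (fun ξ => ⨆ a, (F ξ a + sgn (ξ j) * h a))]
    apply Finset.sum_congr rfl
    intro ξ _
    apply congrArg
    funext a
    rw [hF, flipAt_apply_self, sgn_not]
    ring
  have main : ∀ ξ : Fin n → Bool,
      ((⨆ a, (u ξ a + sgn (ξ j) * f a j)) + ⨆ a, (u ξ a - sgn (ξ j) * f a j))
      ≤ ((⨆ a, (u ξ a + sgn (ξ j) * g a j)) + ⨆ a, (u ξ a - sgn (ξ j) * g a j)) := by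
    intro ξ
    have bd1 : BddAbove (Set.range fun a => u ξ a + g a j) :=
      bddR _ (n * C + C) fun a => by
        have h1 : u ξ a ≤ n*C := le_of_abs_le (hubd ξ a)
        have h2 : g a j ≤ C := le_of_abs_le (hg a j)
        linarith
    have bd2 : BddAbove (Set.range fun a => u ξ a - g a j) :=
      bddR _ (n * C + C) fun a => by
        have h1 : u ξ a ≤ n*C := le_of_abs_le (hubd ξ a)
        have h2 : -C ≤ g a j := neg_le_of_abs_le (hg a j)
        linarith
    have hlip' : ∀ a a', |f a j - f a' j| ≤ |g a j - g a' j| := fun a a' => hlip a a' j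
    rcases sgn_cases (ξ j) with h | h <;> rw [h]
    · simpa using onestep (u ξ) (fun a => f a j) (fun a => g a j) bd1 bd2 hlip'
    · have := onestep (u ξ) (fun a => f a j) (fun a => g a j) bd1 bd2 hlip'
      have e1 : (⨆ a, (u ξ a + (-1:ℝ) * f a j)) = ⨆ a, (u ξ a - f a j) := by
        apply congrArg; funext a; ring
      have e2 : (⨆ a, (u ξ a - (-1:ℝ) * f a j)) = ⨆ a, (u ξ a + f a j) := by
        apply congrArg; funext a; ring
      have e3 : (⨆ a, (u ξ a + (-1:ℝ) * g a j)) = ⨆ a, (u ξ a - g a j) := by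
        apply congrArg; funext a; ring
      have e4 : (⨆ a, (u ξ a - (-1:ℝ) * g a j)) = ⨆ a, (u ξ a + g a j) := by
        apply congrArg; funext a; ring
      rw [e1, e2, e3, e4]
      linarith
  have h2 : 2 * Phi f g s ≤ 2 * Phi f g (insert j s) := by
    rw [hPs, hPt, doubling u hu_flip (fun a => f a j), doubling u hu_flip (fun a => g a j)]
    exact Finset.sum_le_sum fun ξ _ => main ξ
  linarith

lemma contraction (f g : ι → Fin n → ℝ) (C : ℝ) (hC : 0 ≤ C)
    (hf : ∀ a i, |f a i| ≤ C) (hg : ∀ a i, |g a i| ≤ C)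
    (hlip : ∀ a a' (i : Fin n), |f a i - f a' i| ≤ |g a i - g a' i|) :
    ∑ ξ : Fin n → Bool, ⨆ a, ∑ i, sgn (ξ i) * f a i
      ≤ ∑ ξ : Fin n → Bool, ⨆ a, ∑ i, sgn (ξ i) * g a i := by
  classical
  have key : ∀ s : Finset (Fin n), Phi f g ∅ ≤ Phi f g s := by
    intro s
    induction s using Finset.induction_on with
    | empty => exact le_refl _
    | insert _ _ hj ih => exact ih.trans (phi_step f g C hC hf hg hlip _ _ hj)
  have h := key Finset.univ
  simpa [Phi] using h

lemma sum_sgn_bound (h : ι → Fin n → ℝ) (C : ℝ) (hh : ∀ a i, |h a i| ≤ C)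
    (ξ : Fin n → Bool) (a : ι) : |∑ i, sgn (ξ i) * h a i| ≤ n * C := by
  calc |∑ i, sgn (ξ i) * h a i| ≤ ∑ i, |sgn (ξ i) * h a i| := Finset.abs_sum_le_sum_abs _ _
    _ ≤ ∑ _i : Fin n, C := Finset.sum_le_sum fun i _ => by
        rw [abs_mul, abs_sgn, one_mul]; exact hh a i
    _ = n * C := by rw [Finset.sum_const, nsmul_eq_mul, Finset.card_univ, Fintype.card_fin]

lemma contraction_abs (f g : ι → Fin n → ℝ) (C : ℝ) (hC : 0 ≤ C)
    (hf : ∀ a i, |f a i| ≤ C) (hg : ∀ a i, |g a i| ≤ C)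
    (hfg : ∀ a i, |f a i| ≤ |g a i|)
    (hlip : ∀ a a' (i : Fin n), |f a i - f a' i| ≤ |g a i - g a' i|) :
    ∑ ξ : Fin n → Bool, ⨆ a, |∑ i, sgn (ξ i) * f a i|
      ≤ 2 * ∑ ξ : Fin n → Bool, ⨆ a, |∑ i, sgn (ξ i) * g a i| := by
  classical
  set f' : Option ι → Fin n → ℝ := fun o i => o.elim 0 (fun a => f a i) with hf'
  set fneg : Option ι → Fin n → ℝ := fun o i => o.elim 0 (fun a => -(f a i)) with hfneg
  set g' : Option ι → Fin n → ℝ := fun o i => o.elim 0 (fun a => g a i) with hg'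
  have hf'C : ∀ o i, |f' o i| ≤ C := by rintro (_|a) i <;> simp [f', hC] ; exact hf a i
  have hfnegC : ∀ o i, |fneg o i| ≤ C := by rintro (_|a) i <;> simp [fneg, hC] ; exact hf a i
  have hg'C : ∀ o i, |g' o i| ≤ C := by rintro (_|a) i <;> simp [g', hC] ; exact hg a i
  have hlip1 : ∀ o o' (i : Fin n), |f' o i - f' o' i| ≤ |g' o i - g' o' i| := by
    rintro (_|a) (_|a') i <;> simp [f', g']
    · exact hfg a' i
    · exact hfg a i
    · exact hlip a a' i
  have hlip2 : ∀ o o' (i : Fin n), |fneg o i - fneg o' i| ≤ |g' o i - g' o' i| := by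
    rintro (_|a) (_|a') i <;> simp [fneg, g']
    · exact hfg a' i
    · exact hfg a i
    · rw [show -f a i + f a' i = -(f a i - f a' i) by ring, abs_neg]; exact hlip a a' i
  have c1 := contraction f' g' C hC hf'C hg'C hlip1
  have c2 := contraction fneg g' C hC hfnegC hg'C hlip2
  have bddf' : ∀ ξ : Fin n → Bool, BddAbove (Set.range fun o => ∑ i, sgn (ξ i) * f' o i) :=
    fun ξ => bddR _ (n * C) fun o => le_of_abs_le (sum_sgn_bound f' C hf'C ξ o)
  have bddfneg : ∀ ξ : Fin n → Bool, BddAbove (Set.range fun o => ∑ i, sgn (ξ i) * fneg o i) :=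
    fun ξ => bddR _ (n * C) fun o => le_of_abs_le (sum_sgn_bound fneg C hfnegC ξ o)
  have bddgabs : ∀ ξ : Fin n → Bool, BddAbove (Set.range fun a : ι => |∑ i, sgn (ξ i) * g a i|) :=
    fun ξ => bddR _ (n * C) fun a => sum_sgn_bound g C hg ξ a
  have stepA : ∀ ξ : Fin n → Bool, (⨆ a, |∑ i, sgn (ξ i) * f a i|)
      ≤ (⨆ o, ∑ i, sgn (ξ i) * f' o i) + (⨆ o, ∑ i, sgn (ξ i) * fneg o i) := by
    intro ξ
    apply ciSup_le
    intro a
    have h1 : (∑ i, sgn (ξ i) * f a i) ≤ ⨆ o, ∑ i, sgn (ξ i) * f' o i := by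
      have := le_ciSup (bddf' ξ) (some a); simpa [f'] using this
    have h2 : (-∑ i, sgn (ξ i) * f a i) ≤ ⨆ o, ∑ i, sgn (ξ i) * fneg o i := by
      have h := le_ciSup (bddfneg ξ) (some a)
      have e : (∑ i, sgn (ξ i) * fneg (some a) i) = -∑ i, sgn (ξ i) * f a i := by
        simp only [hfneg, Option.elim_some, mul_neg]
        rw [Finset.sum_neg_distrib]
      rw [e] at h; exact h
    have h3 : (0:ℝ) ≤ ⨆ o, ∑ i, sgn (ξ i) * f' o i := by
      have := le_ciSup (bddf' ξ) none; simpa [f'] using this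
    have h4 : (0:ℝ) ≤ ⨆ o, ∑ i, sgn (ξ i) * fneg o i := by
      have := le_ciSup (bddfneg ξ) none; simpa [fneg] using this
    rcases abs_cases (∑ i, sgn (ξ i) * f a i) with ⟨h, _⟩ | ⟨h, _⟩ <;> rw [h] <;> linarith
  have stepC : ∀ ξ : Fin n → Bool, (⨆ o, ∑ i, sgn (ξ i) * g' o i)
      ≤ ⨆ a, |∑ i, sgn (ξ i) * g a i| := by
    intro ξ
    apply ciSup_le
    rintro (_|a)
    · have a0 : ι := Classical.arbitrary ι
      have := le_ciSup (bddgabs ξ) a0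
      simp only [g', Option.elim]
      calc (∑ i : Fin n, sgn (ξ i) * 0) = 0 := by simp
        _ ≤ |∑ i, sgn (ξ i) * g a0 i| := abs_nonneg _
        _ ≤ _ := this
    · have := le_ciSup (bddgabs ξ) a
      simp only [g', Option.elim]
      exact (le_abs_self _).trans this
  calc ∑ ξ : Fin n → Bool, ⨆ a, |∑ i, sgn (ξ i) * f a i|
      ≤ ∑ ξ : Fin n → Bool,
          ((⨆ o, ∑ i, sgn (ξ i) * f' o i) + (⨆ o, ∑ i, sgn (ξ i) * fneg o i)) :=
        Finset.sum_le_sum fun ξ _ => stepA ξ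
    _ = (∑ ξ : Fin n → Bool, ⨆ o, ∑ i, sgn (ξ i) * f' o i)
        + ∑ ξ : Fin n → Bool, ⨆ o, ∑ i, sgn (ξ i) * fneg o i := Finset.sum_add_distrib
    _ ≤ (∑ ξ : Fin n → Bool, ⨆ o, ∑ i, sgn (ξ i) * g' o i)
        + ∑ ξ : Fin n → Bool, ⨆ o, ∑ i, sgn (ξ i) * g' o i := add_le_add c1 c2
    _ ≤ (∑ ξ : Fin n → Bool, ⨆ a, |∑ i, sgn (ξ i) * g a i|)
        + ∑ ξ : Fin n → Bool, ⨆ a, |∑ i, sgn (ξ i) * g a i| :=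
        add_le_add (Finset.sum_le_sum fun ξ _ => stepC ξ) (Finset.sum_le_sum fun ξ _ => stepC ξ)
    _ = 2 * ∑ ξ : Fin n → Bool, ⨆ a, |∑ i, sgn (ξ i) * g a i| := by ring

end ContractionMachinery

section ApplicationHelpers

lemma mulVec_sum_smul {N m : ℕ} (A : Matrix (Fin N) (Fin N) ℝ) (ε : Fin m → ℝ)
    (v : Fin m → Vec N) : A.mulVec (∑ i, ε i • v i) = ∑ i, ε i • A.mulVec (v i) := by
  rw [show A.mulVec (∑ i, ε i • v i) = A.mulVecLin (∑ i, ε i • v i) from rfl]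
  rw [map_sum]
  simp [Matrix.mulVecLin_apply]

lemma conv_sum_smul {N m : ℕ} (U : Matrix (Fin N) (Fin N) ℝ) (b : Vec N) (ε : Fin m → ℝ)
    (v : Fin m → Vec N) : conv U b (∑ i, ε i • v i) = ∑ i, ε i • conv U b (v i) := by
  unfold conv
  rw [mulVec_sum_smul]
  have h : (U.transpose.mulVec b * ∑ i, ε i • U.transpose.mulVec (v i))
      = ∑ i, ε i • (U.transpose.mulVec b * U.transpose.mulVec (v i)) := by
    funext k
    simp only [Pi.mul_apply, Finset.sum_apply, Pi.smul_apply, smul_eq_mul, Finset.mul_sum]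
    apply Finset.sum_congr rfl
    intro i _
    ring
  rw [h, mulVec_sum_smul]

lemma norm_exists_coord {N : ℕ} (hN : 1 ≤ N) (z : Vec N) : ∃ k : Fin N, ‖z‖ = |z k| := by
  haveI : Nonempty (Fin N) := ⟨⟨0, hN⟩⟩
  obtain ⟨k, _, hk⟩ := Finset.exists_mem_eq_sup (Finset.univ : Finset (Fin N))
    ⟨Classical.arbitrary _, Finset.mem_univ _⟩ (fun i => ‖z i‖₊)
  exact ⟨k, by rw [Pi.norm_def, hk]; simp [Real.norm_eq_abs]⟩

lemma coord_le_norm {N : ℕ} (z : Vec N) (k : Fin N) : |z k| ≤ ‖z‖ := by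
  simpa [Real.norm_eq_abs] using norm_le_pi_norm z k

lemma abs_relu_le (t : ℝ) : |max t 0| ≤ |t| := by
  rw [abs_of_nonneg (le_max_right t 0)]
  exact max_le (le_abs_self t) (abs_nonneg t)

end ApplicationHelpers

/-- contraction step: the Rademacher average of the suprema over `T` is
bounded by `2D₂ E‖∑ ξᵢ xᵢ‖_∞ + 2 E|∑ ξᵢ|`. -/
theorem contraction_step {N : ℕ} (S : Setting N)
    (hnrm : S.nrm = fun x => ‖x‖) (D2 : ℝ) (hD2 : 0 < D2)
    (hconv2 : ∀ b ∈ S.W, ∀ (m : ℕ) (εs : Fin m → ℝ) (ys : Fin m → Vec N),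
      (∀ i, εs i = 1 ∨ εs i = -1) → (∀ i, ys i ∈ S.dom) →
      ‖conv S.U b (∑ i, εs i • ys i)‖ ≤ D2 * S.conorm b * ‖∑ i, εs i • ys i‖)
    (n : ℕ) (hn : 1 ≤ n) (xs : Fin n → Vec N) (hxs : ∀ i, xs i ∈ S.dom) :
    ((2 : ℝ) ^ n)⁻¹ * ∑ ξ : Fin n → Bool,
        sSup {r : ℝ | ∃ b c : Vec N, b ∈ S.W ∧ S.conorm b + ‖c‖ = 1 ∧
          r = ‖∑ i, sgn (ξ i) • relu (conv S.U b (xs i) + c)‖}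
      ≤ 2 * D2 * (((2 : ℝ) ^ n)⁻¹ * ∑ ξ : Fin n → Bool, ‖∑ i, sgn (ξ i) • xs i‖)
        + 2 * (((2 : ℝ) ^ n)⁻¹ * ∑ ξ : Fin n → Bool, |∑ i, sgn (ξ i)|) := by
  classical
  have hNpos : 0 < N := S.hN
  haveI : Nonempty (Fin N) := ⟨⟨0, hNpos⟩⟩
  -- `conorm` basics
  have hconorm0 : S.conorm 0 = 0 := by
    have := S.conorm_smul 0 0 S.W.zero_mem
    simpa using this
  have hconorm_nonneg : ∀ b ∈ S.W, 0 ≤ S.conorm b := by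
    intro b hb
    have hneg : S.conorm (-b) = S.conorm b := by
      have := S.conorm_smul (-1) b hb
      simpa using this
    have htri := S.conorm_add b (-b) hb (S.W.neg_mem hb)
    rw [add_neg_cancel, hconorm0, hneg] at htri
    linarith
  -- the index type
  set ι := {p : Vec N × Vec N × Fin N // p.1 ∈ S.W ∧ S.conorm p.1 + ‖p.2.1‖ = 1} with hι
  haveI : Nonempty ι := by
    refine ⟨⟨(0, fun _ => (1:ℝ), ⟨0, hNpos⟩), S.W.zero_mem, ?_⟩⟩
    rw [hconorm0]
    simp [pi_norm_const]
  set f : ι → Fin n → ℝ := fun a i => relu (conv S.U a.1.1 (xs i) + a.1.2.1) a.1.2.2 with hfdef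
  set g : ι → Fin n → ℝ := fun a i => (conv S.U a.1.1 (xs i) + a.1.2.1) a.1.2.2 with hgdef
  have hfg_eq : ∀ a i, f a i = max (g a i) 0 := fun a i => rfl
  have hgb : ∀ (a : ι) (i : Fin n), |g a i| ≤ 1 := by
    rintro ⟨⟨b, c, k⟩, hb, hbc⟩ i
    have h1 : ‖conv S.U b (xs i)‖ ≤ S.conorm b := by
      have := S.conv_nrm_le b hb (xs i) (hxs i)
      rwa [hnrm] at this
    calc |g ⟨⟨b, c, k⟩, hb, hbc⟩ i| = |(conv S.U b (xs i) + c) k| := rfl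
      _ ≤ ‖conv S.U b (xs i) + c‖ := coord_le_norm _ _
      _ ≤ ‖conv S.U b (xs i)‖ + ‖c‖ := norm_add_le _ _
      _ ≤ S.conorm b + ‖c‖ := by linarith
      _ = 1 := hbc
  have hfb : ∀ (a : ι) (i : Fin n), |f a i| ≤ 1 := by
    intro a i
    rw [hfg_eq]
    exact (abs_relu_le _).trans (hgb a i)
  have hfg : ∀ (a : ι) (i : Fin n), |f a i| ≤ |g a i| := by
    intro a i
    rw [hfg_eq]
    exact abs_relu_le _
  have hlip : ∀ (a a' : ι) (i : Fin n), |f a i - f a' i| ≤ |g a i - g a' i| := by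
    intro a a' i
    rw [hfg_eq, hfg_eq]
    exact abs_max_sub_max_le_abs _ _ _
  have bddabsf : ∀ ξ : Fin n → Bool,
      BddAbove (Set.range fun a : ι => |∑ i, sgn (ξ i) * f a i|) :=
    fun ξ => bddR _ (n * 1) fun a => sum_sgn_bound f 1 hfb ξ a
  -- step 1 : sSup ≤ sup of |sum of f|
  have step1 : ∀ ξ : Fin n → Bool,
      sSup {r : ℝ | ∃ b c : Vec N, b ∈ S.W ∧ S.conorm b + ‖c‖ = 1 ∧
          r = ‖∑ i, sgn (ξ i) • relu (conv S.U b (xs i) + c)‖}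
        ≤ ⨆ a : ι, |∑ i, sgn (ξ i) * f a i| := by
    intro ξ
    have hnn : (0:ℝ) ≤ ⨆ a : ι, |∑ i, sgn (ξ i) * f a i| :=
      (abs_nonneg _).trans (le_ciSup (bddabsf ξ) (Classical.arbitrary ι))
    apply Real.sSup_le _ hnn
    rintro r ⟨b, c, hb, hbc, rfl⟩
    obtain ⟨k, hk⟩ := norm_exists_coord hNpos (∑ i, sgn (ξ i) • relu (conv S.U b (xs i) + c))
    rw [hk]
    set a : ι := ⟨(b, c, k), hb, hbc⟩ with ha
    have hz : (∑ i, sgn (ξ i) • relu (conv S.U b (xs i) + c)) k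
        = ∑ i, sgn (ξ i) * f a i := by
      rw [Finset.sum_apply]
      apply Finset.sum_congr rfl
      intro i _
      rfl
    rw [hz]
    exact le_ciSup (bddabsf ξ) a
  -- step 2 : sup of |sum of g| ≤ D2‖X‖ + |Σ|
  have step2 : ∀ ξ : Fin n → Bool,
      (⨆ a : ι, |∑ i, sgn (ξ i) * g a i|)
        ≤ D2 * ‖∑ i, sgn (ξ i) • xs i‖ + |∑ i, sgn (ξ i)| := by
    intro ξ
    apply ciSup_le
    rintro ⟨⟨b, c, k⟩, hb, hbc⟩
    set X := ∑ i, sgn (ξ i) • xs i with hX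
    set Sg := ∑ i, sgn (ξ i) with hSg
    have hsplit : (∑ i, sgn (ξ i) * g ⟨(b, c, k), hb, hbc⟩ i)
        = conv S.U b X k + Sg * c k := by
      have h1 : conv S.U b X k = ∑ i, sgn (ξ i) * conv S.U b (xs i) k := by
        rw [hX, conv_sum_smul, Finset.sum_apply]
        apply Finset.sum_congr rfl
        intro i _
        rfl
      have h2 : Sg * c k = ∑ i, sgn (ξ i) * c k := by
        rw [hSg, Finset.sum_mul]
      rw [h1, h2, ← Finset.sum_add_distrib]
      apply Finset.sum_congr rfl
      intro i _
      show sgn (ξ i) * (conv S.U b (xs i) k + c k) = _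
      ring
    rw [hsplit]
    have hcb : ‖conv S.U b X‖ ≤ D2 * S.conorm b * ‖X‖ :=
      hconv2 b hb n (fun i => sgn (ξ i)) xs (fun i => sgn_cases (ξ i)) hxs
    have e1 : |conv S.U b X k| ≤ D2 * S.conorm b * ‖X‖ := (coord_le_norm _ _).trans hcb
    have e2 : |Sg * c k| ≤ |Sg| * ‖c‖ := by
      rw [abs_mul]
      exact mul_le_mul_of_nonneg_left (coord_le_norm _ _) (abs_nonneg _)
    have hb0 : 0 ≤ S.conorm b := hconorm_nonneg b hb
    have hc0 : 0 ≤ ‖c‖ := norm_nonneg c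
    have hX0 : 0 ≤ ‖X‖ := norm_nonneg X
    have hSg0 : 0 ≤ |Sg| := abs_nonneg Sg
    have hb1 : S.conorm b ≤ 1 := by linarith
    have hc1 : ‖c‖ ≤ 1 := by linarith
    have f1 : D2 * S.conorm b * ‖X‖ ≤ D2 * ‖X‖ := by
      have h := mul_le_mul_of_nonneg_right (mul_le_mul_of_nonneg_left hb1 hD2.le) hX0
      rw [mul_one] at h
      exact h
    have f2 : |Sg| * ‖c‖ ≤ |Sg| := by
      have h := mul_le_mul_of_nonneg_left hc1 hSg0
      rw [mul_one] at h
      exact h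
    calc |conv S.U b X k + Sg * c k| ≤ |conv S.U b X k| + |Sg * c k| := abs_add_le _ _
      _ ≤ D2 * S.conorm b * ‖X‖ + |Sg| * ‖c‖ := add_le_add e1 e2
      _ ≤ D2 * ‖X‖ + |Sg| := add_le_add f1 f2
  -- assemble
  have hmain := contraction_abs f g 1 one_pos.le hfb hgb hfg hlip
  have sum1 :
      (∑ ξ : Fin n → Bool, sSup {r : ℝ | ∃ b c : Vec N, b ∈ S.W ∧ S.conorm b + ‖c‖ = 1 ∧
          r = ‖∑ i, sgn (ξ i) • relu (conv S.U b (xs i) + c)‖})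
        ≤ ∑ ξ : Fin n → Bool, ⨆ a : ι, |∑ i, sgn (ξ i) * f a i| :=
    Finset.sum_le_sum fun ξ _ => step1 ξ
  have sum3 : (∑ ξ : Fin n → Bool, ⨆ a : ι, |∑ i, sgn (ξ i) * g a i|)
      ≤ ∑ ξ : Fin n → Bool, (D2 * ‖∑ i, sgn (ξ i) • xs i‖ + |∑ i, sgn (ξ i)|) :=
    Finset.sum_le_sum fun ξ _ => step2 ξ
  have hpos : (0:ℝ) < ((2:ℝ) ^ n)⁻¹ := by positivity
  calc ((2 : ℝ) ^ n)⁻¹ * ∑ ξ : Fin n → Bool,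
        sSup {r : ℝ | ∃ b c : Vec N, b ∈ S.W ∧ S.conorm b + ‖c‖ = 1 ∧
          r = ‖∑ i, sgn (ξ i) • relu (conv S.U b (xs i) + c)‖}
      ≤ ((2 : ℝ) ^ n)⁻¹ * (2 * ∑ ξ : Fin n → Bool,
          (D2 * ‖∑ i, sgn (ξ i) • xs i‖ + |∑ i, sgn (ξ i)|)) := by
        apply mul_le_mul_of_nonneg_left _ hpos.le
        calc (∑ ξ : Fin n → Bool, sSup _) ≤ ∑ ξ : Fin n → Bool, ⨆ a : ι, |∑ i, sgn (ξ i) * f a i| := sum1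
          _ ≤ 2 * ∑ ξ : Fin n → Bool, ⨆ a : ι, |∑ i, sgn (ξ i) * g a i| := hmain
          _ ≤ 2 * ∑ ξ : Fin n → Bool, (D2 * ‖∑ i, sgn (ξ i) • xs i‖ + |∑ i, sgn (ξ i)|) := by
              linarith
    _ = 2 * D2 * (((2 : ℝ) ^ n)⁻¹ * ∑ ξ : Fin n → Bool, ‖∑ i, sgn (ξ i) • xs i‖)
        + 2 * (((2 : ℝ) ^ n)⁻¹ * ∑ ξ : Fin n → Bool, |∑ i, sgn (ξ i)|) := by
        rw [Finset.sum_add_distrib, ← Finset.mul_sum]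
        ring
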